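/- Under Assumptions of a connected server graph and bounded client gradients (‖∇f^{ij}(w)‖ ≤ θ for all w), the DFL algorithm satisfies, for every server i and every epoch p: ‖w^i_p - w̄_p‖ ≤ σ_A^p ‖W_0 - 1 w̄'_0‖ + √M T_C θ γ σ_A/(1 - σ_A), where σ_A = ‖A^{T_S} - (1/M)11'‖ < 1 and w̄_p is the average of the M server models. -/

import Mathlib

/-!
Let `J = (1/M) 11ᵀ`, so that the rows of `D_p = W_p - J W_p` are the deviations `w^i_p - w̄_p`.
Both row and column sums of `S = A^{T_S}` are one, hence `S J = J S = J`, and with `J² = J`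
this gives `D_{p+1} = (S - J)(D_p - γ G_p)`. Each row of `G_p` is an average of `N` sums of
`T_C` gradients, so `‖G_p‖ ≤ √M T_C θ`, and therefore
`‖D_{p+1}‖ ≤ σ_A ‖D_p‖ + σ_A γ √M T_C θ`. Unrolling this affine recursion and bounding a row
by the spectral norm of the whole matrix gives the claim.
-/

/-- Spectral norm of a matrix. -/
noncomputable def specNorm {m n : ℕ} (A : Matrix (Fin m) (Fin n) ℝ) : ℝ :=
  ‖LinearMap.toContinuousLinearMap (Matrix.toEuclideanLin A)‖

/-- The `i`-th row of a matrix as a vector of Euclidean space. -/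
noncomputable def mrow {m n : ℕ} (A : Matrix (Fin m) (Fin n) ℝ) (i : Fin m) :
    EuclideanSpace ℝ (Fin n) := (WithLp.equiv 2 (Fin n → ℝ)).symm (A i)

open Matrix
open scoped RealInnerProductSpace Matrix.Norms.L2Operator

lemma pow_mul_eq_self_of_mul_eq_self {M : Type*} [Monoid M] {a b : M} (h : a * b = b) :
    ∀ n : ℕ, a ^ n * b = b
  | 0 => by rw [pow_zero, one_mul]
  | n + 1 => by rw [pow_succ, mul_assoc, h, pow_mul_eq_self_of_mul_eq_self h n]

lemma mul_pow_eq_self_of_mul_eq_self {M : Type*} [Monoid M] {a b : M} (h : b * a = b) :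
    ∀ n : ℕ, b * a ^ n = b
  | 0 => by rw [pow_zero, mul_one]
  | n + 1 => by rw [pow_succ', ← mul_assoc, h, mul_pow_eq_self_of_mul_eq_self h n]

lemma le_pow_mul_add_div_one_sub {x : ℕ → ℝ} {σ c : ℝ} (hσ : 0 ≤ σ) (hσ1 : σ < 1) (hc : 0 ≤ c)
    (h : ∀ q, x (q + 1) ≤ σ * x q + c) : ∀ q, x q ≤ σ ^ q * x 0 + c / (1 - σ)
  | 0 => by simpa using div_nonneg hc (sub_nonneg.mpr hσ1.le)
  | q + 1 => by
    have ih := le_pow_mul_add_div_one_sub hσ hσ1 hc h q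
    have hfix : σ * (c / (1 - σ)) + c = c / (1 - σ) := by
      field_simp [(sub_pos.mpr hσ1).ne']
      ring
    calc x (q + 1) ≤ σ * x q + c := h q
      _ ≤ σ * (σ ^ q * x 0 + c / (1 - σ)) + c := by gcongr
      _ = σ ^ (q + 1) * x 0 + (σ * (c / (1 - σ)) + c) := by ring
      _ = σ ^ (q + 1) * x 0 + c / (1 - σ) := by rw [hfix]

lemma norm_inv_smul_sum_sum_le {E : Type*} [SeminormedAddCommGroup E] [NormedSpace ℝ E]
    {N : ℕ} (hN : 0 < N) (T : ℕ) {θ : ℝ} (g : Fin N → ℕ → E) (hg : ∀ j t, ‖g j t‖ ≤ θ) :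
    ‖(N : ℝ)⁻¹ • ∑ j, ∑ t ∈ Finset.range T, g j t‖ ≤ T * θ :=
  calc ‖(N : ℝ)⁻¹ • ∑ j, ∑ t ∈ Finset.range T, g j t‖
      = (N : ℝ)⁻¹ * ‖∑ j, ∑ t ∈ Finset.range T, g j t‖ := by
        rw [norm_smul, norm_inv, Real.norm_natCast]
    _ ≤ (N : ℝ)⁻¹ * (N * (T * θ)) := by
        gcongr
        refine (norm_sum_le_of_le _ fun j _ => norm_sum_le_of_le _ fun t _ => hg j t).trans ?_
        simp
    _ = T * θ := by field_simp

lemma consensus_sub_avg_eq {R m n : Type*} [Ring R] [Fintype m] {S J : Matrix m m R}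
    (hSJ : S * J = J) (hJS : J * S = J) (hJJ : J * J = J) (X Y : Matrix m n R) :
    S * X - J * (S * X) = (S - J) * (X - J * Y) := by
  have hSJJ : (S - J) * J = 0 := by rw [Matrix.sub_mul, hSJ, hJJ, sub_self]
  rw [← Matrix.mul_assoc, hJS, ← Matrix.sub_mul, Matrix.mul_sub, ← Matrix.mul_assoc, hSJJ,
    Matrix.zero_mul, sub_zero]

lemma norm_consensus_sub_avg_le {m n : Type*} [Fintype m] [DecidableEq m] [Fintype n]
    [DecidableEq n] {S J : Matrix m m ℝ} (hSJ : S * J = J) (hJS : J * S = J) (hJJ : J * J = J)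
    (X G : Matrix m n ℝ) {γ : ℝ} (hγ : 0 ≤ γ) :
    ‖S * (X - γ • G) - J * (S * (X - γ • G))‖ ≤ ‖S - J‖ * (‖X - J * X‖ + γ * ‖G‖) := by
  rw [consensus_sub_avg_eq hSJ hJS hJJ _ X, sub_right_comm]
  refine (l2_opNorm_mul _ _).trans ?_
  gcongr
  exact (norm_sub_le _ _).trans_eq (by rw [norm_smul, Real.norm_of_nonneg hγ])

noncomputable def avgMatrix (M : ℕ) : Matrix (Fin M) (Fin M) ℝ := of fun _ _ => (M : ℝ)⁻¹

lemma mul_avgMatrix_of_sum_row_eq_one {M : ℕ} {A : Matrix (Fin M) (Fin M) ℝ}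
    (h : ∀ i, ∑ j, A i j = 1) : A * avgMatrix M = avgMatrix M := by
  ext i k
  simp [avgMatrix, mul_apply, ← Finset.sum_mul, h]

lemma avgMatrix_mul_of_sum_col_eq_one {M : ℕ} {A : Matrix (Fin M) (Fin M) ℝ}
    (h : ∀ j, ∑ i, A i j = 1) : avgMatrix M * A = avgMatrix M := by
  ext i k
  simp [avgMatrix, mul_apply, ← Finset.mul_sum, h]

lemma avgMatrix_mul_self {M : ℕ} (hM : M ≠ 0) : avgMatrix M * avgMatrix M = avgMatrix M :=
  mul_avgMatrix_of_sum_row_eq_one fun _ => by simp [avgMatrix, hM]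

lemma specNorm_eq_l2_opNorm {m n : ℕ} (A : Matrix (Fin m) (Fin n) ℝ) : specNorm A = ‖A‖ := rfl

lemma mrow_sub {m n : ℕ} (X Y : Matrix (Fin m) (Fin n) ℝ) (i : Fin m) :
    mrow (X - Y) i = mrow X i - mrow Y i := rfl

lemma mrow_avgMatrix_mul {M d : ℕ} (X : Matrix (Fin M) (Fin d) ℝ) (i : Fin M) :
    mrow (avgMatrix M * X) i = (M : ℝ)⁻¹ • ∑ k, mrow X k := by
  ext c
  simp only [mrow, WithLp.equiv_symm_apply, PiLp.smul_apply, WithLp.ofLp_sum, PiLp.toLp_apply]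
  simp only [avgMatrix, mul_apply, of_apply, ← Finset.mul_sum, smul_eq_mul]
  exact congrArg _ (Finset.sum_apply c Finset.univ fun k => (X k : Fin d → ℝ)).symm

lemma toEuclideanLin_apply_eq_inner_mrow {m n : ℕ} (B : Matrix (Fin m) (Fin n) ℝ)
    (x : EuclideanSpace ℝ (Fin n)) (i : Fin m) :
    toEuclideanLin B x i = ⟪mrow B i, x⟫ := by
  simp [mulVec, dotProduct, PiLp.inner_apply, mrow, mul_comm]

lemma norm_mrow_le {m n : ℕ} (B : Matrix (Fin m) (Fin n) ℝ) (i : Fin m) :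
    ‖mrow B i‖ ≤ ‖B‖ := by
  have h : ‖mrow B i‖ ^ 2 ≤ ‖B‖ * ‖mrow B i‖ :=
    calc ‖mrow B i‖ ^ 2 = toEuclideanLin B (mrow B i) i := by
          rw [toEuclideanLin_apply_eq_inner_mrow, real_inner_self_eq_norm_sq]
      _ ≤ ‖toEuclideanLin B (mrow B i) i‖ := Real.le_norm_self _
      _ ≤ ‖toEuclideanLin B (mrow B i)‖ := PiLp.norm_apply_le _ i
      _ ≤ ‖B‖ * ‖mrow B i‖ := (LinearMap.toContinuousLinearMap (toEuclideanLin B)).le_opNorm _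
  nlinarith [norm_nonneg (mrow B i), norm_nonneg B]

lemma l2_opNorm_le_sqrt_mul_of_norm_mrow_le {m n : ℕ} (B : Matrix (Fin m) (Fin n) ℝ) {c : ℝ}
    (hc : 0 ≤ c) (h : ∀ i, ‖mrow B i‖ ≤ c) : ‖B‖ ≤ Real.sqrt m * c := by
  refine ContinuousLinearMap.opNorm_le_bound _ (by positivity) fun x => ?_
  have hentry (i : Fin m) : ‖toEuclideanLin B x i‖ ^ 2 ≤ (c * ‖x‖) ^ 2 := by
    rw [toEuclideanLin_apply_eq_inner_mrow, Real.norm_eq_abs]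
    gcongr
    exact (abs_real_inner_le_norm _ _).trans (by gcongr; exact h i)
  calc ‖toEuclideanLin B x‖ = Real.sqrt (∑ i, ‖toEuclideanLin B x i‖ ^ 2) :=
        EuclideanSpace.norm_eq _
    _ ≤ Real.sqrt (∑ _i : Fin m, (c * ‖x‖) ^ 2) :=
        Real.sqrt_le_sqrt (Finset.sum_le_sum fun i _ => hentry i)
    _ = Real.sqrt m * c * ‖x‖ := by
        rw [Finset.sum_const, Finset.card_univ, Fintype.card_fin, nsmul_eq_mul,
          Real.sqrt_mul (Nat.cast_nonneg m), Real.sqrt_sq (by positivity), mul_assoc]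

open Finset in
theorem dfl_server_to_average_bound_general (M N d TC TS : ℕ)
    (hM : 0 < M) (hN : 0 < N)
    (θ γ : ℝ) (hθ : 0 ≤ θ) (hγ : 0 ≤ γ)
    (A : Matrix (Fin M) (Fin M) ℝ)
    (hrowsum : ∀ i, ∑ j, A i j = 1)
    (hcolsum : ∀ j, ∑ i, A i j = 1)
    -- client gradient fields, bounded by θ
    (f' : Fin M → Fin N → EuclideanSpace ℝ (Fin d) → EuclideanSpace ℝ (Fin d))
    (hgradbd : ∀ i j w, ‖f' i j w‖ ≤ θ)
    -- server models (rows of W p) and client iterates within each epoch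
    (W : ℕ → Matrix (Fin M) (Fin d) ℝ)
    (wc : ℕ → Fin M → Fin N → ℕ → EuclideanSpace ℝ (Fin d))
    -- aggregated client gradients per server
    (G : ℕ → Matrix (Fin M) (Fin d) ℝ)
    (hG : ∀ p i, mrow (G p) i =
      (N : ℝ)⁻¹ • ∑ j : Fin N, ∑ t ∈ Finset.range TC, f' i j (wc p i j t))
    -- epoch update: client aggregation followed by T_S consensus steps
    (hup : ∀ p, W (p + 1) = A ^ TS * (W p - γ • G p))
    (J : Matrix (Fin M) (Fin M) ℝ) (hJ : J = Matrix.of fun _ _ => (M : ℝ)⁻¹)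
    (σA : ℝ) (hσA : σA = specNorm (A ^ TS - J)) (hσlt : σA < 1) :
    ∀ (i : Fin M) (p : ℕ),
      ‖mrow (W p) i - (M : ℝ)⁻¹ • ∑ k : Fin M, mrow (W p) k‖ ≤
        σA ^ p * specNorm (W 0 - J * W 0) +
          Real.sqrt M * TC * θ * γ * σA / (1 - σA) := by
  intro i p
  obtain rfl : J = avgMatrix M := hJ
  have hSJ := pow_mul_eq_self_of_mul_eq_self (mul_avgMatrix_of_sum_row_eq_one hrowsum) TS
  have hJS := mul_pow_eq_self_of_mul_eq_self (avgMatrix_mul_of_sum_col_eq_one hcolsum) TS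
  have hσ : ‖A ^ TS - avgMatrix M‖ = σA := hσA.symm
  have hσ0 : 0 ≤ σA := hσ ▸ norm_nonneg _
  have hGbd (q : ℕ) : ‖G q‖ ≤ Real.sqrt M * (TC * θ) :=
    l2_opNorm_le_sqrt_mul_of_norm_mrow_le _ (by positivity) fun a =>
      hG q a ▸ norm_inv_smul_sum_sum_le hN TC _ fun j t => hgradbd a j _
  have hstep (q : ℕ) : ‖W (q + 1) - avgMatrix M * W (q + 1)‖ ≤
      σA * ‖W q - avgMatrix M * W q‖ + σA * (γ * (Real.sqrt M * (TC * θ))) := by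
    rw [hup, ← mul_add]
    refine (norm_consensus_sub_avg_le hSJ hJS (avgMatrix_mul_self hM.ne') _ _ hγ).trans ?_
    rw [hσ]
    gcongr
    exact hGbd q
  rw [← mrow_avgMatrix_mul, ← mrow_sub]
  calc ‖mrow (W p - avgMatrix M * W p) i‖ ≤ ‖W p - avgMatrix M * W p‖ := norm_mrow_le _ _
    _ ≤ σA ^ p * ‖W 0 - avgMatrix M * W 0‖ + σA * (γ * (Real.sqrt M * (TC * θ))) / (1 - σA) :=
        le_pow_mul_add_div_one_sub (x := fun q => ‖W q - avgMatrix M * W q‖)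
          hσ0 hσlt (by positivity) hstep p
    _ = _ := by rw [specNorm_eq_l2_opNorm]; ring

open Finset in
/-- Lemma 1 (server-to-average deviation): under the DFL updates with doubly
stochastic consensus matrix `A` (with `σ_A = ‖A^{T_S} - (1/M)11'‖ < 1`, guaranteed
by the connected server graph) and client gradients bounded by `θ`, every server's
model satisfies
`‖w^i_p - w̄_p‖ ≤ σ_A^p ‖W_0 - 1w̄'_0‖ + √M T_C θ γ σ_A/(1 - σ_A)`. -/
theorem dfl_server_to_average_bound (M N d TC TS : ℕ)
    (hM : 0 < M) (hN : 0 < N) (hTC : 0 < TC) (hTS : 0 < TS)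
    (θ γ : ℝ) (hθ : 0 ≤ θ) (hγ : 0 ≤ γ)
    (A : Matrix (Fin M) (Fin M) ℝ)
    (hnn : ∀ i j, 0 ≤ A i j)
    (hrowsum : ∀ i, ∑ j, A i j = 1)
    (hcolsum : ∀ j, ∑ i, A i j = 1)
    -- client gradient fields, bounded by θ
    (f' : Fin M → Fin N → EuclideanSpace ℝ (Fin d) → EuclideanSpace ℝ (Fin d))
    (hgradbd : ∀ i j w, ‖f' i j w‖ ≤ θ)
    -- server models (rows of W p) and client iterates within each epoch
    (W : ℕ → Matrix (Fin M) (Fin d) ℝ)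
    (wc : ℕ → Fin M → Fin N → ℕ → EuclideanSpace ℝ (Fin d))
    (hwc0 : ∀ p i j, wc p i j 0 = mrow (W p) i)
    (hwcstep : ∀ p i j t, t < TC → wc p i j (t + 1) = wc p i j t - γ • f' i j (wc p i j t))
    -- aggregated client gradients per server
    (G : ℕ → Matrix (Fin M) (Fin d) ℝ)
    (hG : ∀ p i, mrow (G p) i =
      (N : ℝ)⁻¹ • ∑ j : Fin N, ∑ t ∈ Finset.range TC, f' i j (wc p i j t))
    -- epoch update: client aggregation followed by T_S consensus steps
    (hup : ∀ p, W (p + 1) = A ^ TS * (W p - γ • G p))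
    (J : Matrix (Fin M) (Fin M) ℝ) (hJ : J = Matrix.of fun _ _ => (M : ℝ)⁻¹)
    (σA : ℝ) (hσA : σA = specNorm (A ^ TS - J)) (hσlt : σA < 1) :
    ∀ (i : Fin M) (p : ℕ),
      ‖mrow (W p) i - (M : ℝ)⁻¹ • ∑ k : Fin M, mrow (W p) k‖ ≤
        σA ^ p * specNorm (W 0 - J * W 0) +
          Real.sqrt M * TC * θ * γ * σA / (1 - σA) :=
  dfl_server_to_average_bound_general M N d TC TS hM hN θ γ hθ hγ A hrowsum hcolsum f' hgradbd W wc
    G hG hup J hJ σA hσA hσlt
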